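/- Let T : I → I be a Borel measurable map of a compact interval I, let ζ ∈ I be a periodic point of T of period p ≥ 1 such that T^p restricted to some neighbourhood of ζ is a C¹ diffeomorphism onto its image with |(T^p)′(ζ)| > 1, and let μ be a T-invariant Borel probability measure on I, absolutely continuous with respect to Lebesgue measure, whose density has a version that is continuous and strictly positive at ζ. Set θ = 1 − |(T^p)′(ζ)|^{−1} ∈ (0,1), and let (B_n) be open balls centred at ζ with radii tending to 0. Then for every k ≥ 0, μ(Q_k(B_n))/μ(B_n) → θ(1−θ)^k as n → ∞; in particular the extremal index lim_n μ(Q(B_n))/μ(B_n) equals 1 − |(T^p)′(ζ)|^{−1}. -/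

import Mathlib

open MeasureTheory Filter Set ProbabilityTheory
open scoped ENNReal Topology

noncomputable section

variable {X : Type*}

/-- `U_0(B) = B` and `U_{k+1}(B) = T^{-p}(U_k(B)) ∩ B`. -/
def Uset (T : X → X) (p : ℕ) (B : Set X) : ℕ → Set X
  | 0 => B
  | (k+1) => (T^[p]) ⁻¹' (Uset T p B k) ∩ B

/-- The annuli: `Q_0(B) = B ∩ T^{-p}(Bᶜ)` and `Q_{k+1}(B) = T^{-p}(Q_k(B)) ∩ B`. -/
def Qann (T : X → X) (p : ℕ) (B : Set X) : ℕ → Set X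
  | 0 => B ∩ (T^[p]) ⁻¹' Bᶜ
  | (k+1) => (T^[p]) ⁻¹' (Qann T p B k) ∩ B

/-- The entrance set `E(B) = T^{-p}(B) ∖ B`. -/
def Eset (T : X → X) (p : ℕ) (B : Set X) : Set X := (T^[p]) ⁻¹' B \ B

end

/-! Near the expanding fixed point `ζ` of `S = T^[p]`, `S` multiplies distances to `ζ` by
roughly `λ = |S'(ζ)|`, so `U_k(B(ζ, r))` is squeezed between balls of radii close to
`r λ⁻ᵏ`; since the density is continuous and positive at `ζ`, the measure of a small ball is
nearly proportional to its radius, whence `μ(U_k(B_n)) / μ(B_n) → λ⁻ᵏ`. The annulus `Q_k` is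
`U_k ∖ U_{k+1}`, so its relative measure tends to `λ⁻ᵏ - λ⁻ᵏ⁻¹ = (1 - λ⁻¹) λ⁻ᵏ`. -/

open Metric

section Dynamics

variable {T : X → X} {p : ℕ} {B : Set X}

theorem Uset_antitone : Antitone (Uset T p B) :=
  antitone_nat_of_succ_le fun k => by
    induction k with
    | zero => exact inter_subset_right
    | succ k ih => exact inter_subset_inter_left _ (preimage_mono ih)

theorem Uset_subset_self (k : ℕ) : Uset T p B k ⊆ B :=
  Uset_antitone (Nat.zero_le k)

theorem Qann_eq_Uset_diff (k : ℕ) : Qann T p B k = Uset T p B k \ Uset T p B (k + 1) := by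
  induction k with
  | zero =>
    ext x
    simp only [Qann, Uset, mem_inter_iff, mem_preimage, mem_compl_iff, Set.mem_sdiff]
    tauto
  | succ k ih =>
    ext x
    simp only [Qann, Uset, ih, mem_inter_iff, mem_preimage, Set.mem_sdiff]
    tauto

theorem measurableSet_Uset [MeasurableSpace X] (hT : Measurable T) (hB : MeasurableSet B)
    (k : ℕ) : MeasurableSet (Uset T p B k) := by
  induction k with
  | zero => exact hB
  | succ k ih => exact ((hT.iterate p) ih).inter hB

theorem measure_Qann [MeasurableSpace X] (μ : Measure X) [IsFiniteMeasure μ]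
    (hT : Measurable T) (hB : MeasurableSet B) (k : ℕ) :
    μ (Qann T p B k) = μ (Uset T p B k) - μ (Uset T p B (k + 1)) := by
  rw [Qann_eq_Uset_diff]
  exact measure_sdiff (Uset_antitone k.le_succ)
    (measurableSet_Uset hT hB _).nullMeasurableSet (measure_ne_top μ _)

variable [PseudoMetricSpace X] {ζ : X} {c r : ℝ}

theorem Uset_ball_subset_ball (hc : 0 < c)
    (hT : ∀ x ∈ ball ζ r, c * dist x ζ ≤ dist (T^[p] x) ζ) (k : ℕ) :
    Uset T p (ball ζ r) k ⊆ ball ζ (r / c ^ k) := by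
  induction k with
  | zero => simp [Uset]
  | succ k ih =>
    rintro x ⟨hSx, hx⟩
    have : c * dist x ζ < r / c ^ k := (hT x hx).trans_lt (ih hSx)
    rw [mem_ball, pow_succ, ← div_div]
    exact (lt_div_iff₀' hc).2 this

theorem ball_subset_Uset_ball (hc : 1 ≤ c)
    (hT : ∀ x ∈ ball ζ r, dist (T^[p] x) ζ ≤ c * dist x ζ) (k : ℕ) :
    ball ζ (r / c ^ k) ⊆ Uset T p (ball ζ r) k := by
  induction k with
  | zero => simp [Uset]
  | succ k ih =>
    intro x hx
    have hc0 : 0 < c := zero_lt_one.trans_le hc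
    have hr : 0 < r :=
      (div_pos_iff_of_pos_right (by positivity)).1 (dist_nonneg.trans_lt (mem_ball.1 hx))
    have hxr : x ∈ ball ζ r := ball_subset_ball (div_le_self hr.le (one_le_pow₀ hc)) hx
    refine ⟨ih ?_, hxr⟩
    rw [mem_ball, pow_succ, ← div_div] at *
    calc dist (T^[p] x) ζ ≤ c * dist x ζ := hT x hxr
      _ < c * (r / c ^ k / c) := by gcongr
      _ = r / c ^ k := mul_div_cancel₀ _ hc0.ne'

end Dynamics

theorem eventually_dist_mem_Icc_of_hasDerivAt {S : ℝ → ℝ} {ζ D e : ℝ} (hS : HasDerivAt S D ζ)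
    (hfix : S ζ = ζ) (he : 0 < e) :
    ∀ᶠ x in 𝓝 ζ, dist (S x) ζ ∈ Icc ((|D| - e) * dist x ζ) ((|D| + e) * dist x ζ) := by
  filter_upwards [(hasDerivAt_iff_isLittleO.1 hS).def he] with x hx
  rw [hfix, Real.norm_eq_abs, Real.norm_eq_abs, smul_eq_mul] at hx
  have h₁ := abs_sub_abs_le_abs_sub (S x - ζ) ((x - ζ) * D)
  have h₂ := abs_sub_abs_le_abs_sub ((x - ζ) * D) (S x - ζ)
  rw [abs_sub_comm ((x - ζ) * D)] at h₂
  rw [abs_mul] at h₁ h₂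
  simp only [Real.dist_eq, mem_Icc]
  constructor <;> linarith

theorem ofReal_mul_le_withDensity_ofReal {Ω : Type*} [MeasurableSpace Ω] (ν : Measure Ω)
    {ρ : Ω → ℝ} {s : Set Ω} {a : ℝ} (hs : MeasurableSet s) (h : ∀ x ∈ s, a ≤ ρ x) :
    ENNReal.ofReal a * ν s ≤ ν.withDensity (fun x => ENNReal.ofReal (ρ x)) s := by
  rw [withDensity_apply _ hs, ← setLIntegral_const]
  exact setLIntegral_mono' hs fun x hx => ENNReal.ofReal_le_ofReal (h x hx)

theorem withDensity_ofReal_le_ofReal_mul {Ω : Type*} [MeasurableSpace Ω] (ν : Measure Ω)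
    {ρ : Ω → ℝ} {s : Set Ω} {b : ℝ} (hs : MeasurableSet s) (h : ∀ x ∈ s, ρ x ≤ b) :
    ν.withDensity (fun x => ENNReal.ofReal (ρ x)) s ≤ ENNReal.ofReal b * ν s := by
  rw [withDensity_apply _ hs, ← setLIntegral_const]
  exact setLIntegral_mono' hs fun x hx => ENNReal.ofReal_le_ofReal (h x hx)

theorem withDensity_Uset_div_mem_Icc {T : ℝ → ℝ} {p : ℕ} {ρ : ℝ → ℝ}
    {ζ δ a b c C r : ℝ} (ha : 0 < a) (hc : 1 ≤ c) (hC : 1 ≤ C)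
    (hT : ∀ x ∈ ball ζ δ, dist (T^[p] x) ζ ∈ Icc (c * dist x ζ) (C * dist x ζ))
    {μ : Measure ℝ} (hμ : μ = volume.withDensity fun x => ENNReal.ofReal (ρ x))
    (hρ : ∀ x ∈ ball ζ δ, ρ x ∈ Icc a b) (hr : 0 < r) (hrδ : r ≤ δ) (k : ℕ) :
    μ (Uset T p (ball ζ r) k) / μ (ball ζ r) ∈
      Icc (ENNReal.ofReal (a / b / C ^ k)) (ENNReal.ofReal (b / a / c ^ k)) := by
  have hρζ := hρ ζ (mem_ball_self (hr.trans_le hrδ))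
  have hb : 0 < b := ha.trans_le (hρζ.1.trans hρζ.2)
  have hball : ∀ s ≤ δ, ENNReal.ofReal a * ENNReal.ofReal (2 * s) ≤ μ (ball ζ s) ∧
      μ (ball ζ s) ≤ ENNReal.ofReal b * ENNReal.ofReal (2 * s) := fun s hs => by
    rw [hμ, ← Real.volume_ball ζ s]
    exact ⟨ofReal_mul_le_withDensity_ofReal _ measurableSet_ball
        fun x hx => (hρ x (ball_subset_ball hs hx)).1,
      withDensity_ofReal_le_ofReal_mul _ measurableSet_ball
        fun x hx => (hρ x (ball_subset_ball hs hx)).2⟩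
  have hTr : ∀ x ∈ ball ζ r, dist (T^[p] x) ζ ∈ Icc (c * dist x ζ) (C * dist x ζ) :=
    fun x hx => hT x (ball_subset_ball hrδ hx)
  have hratio : ∀ {a' b' : ℝ}, 0 ≤ a' → 0 < b' → ∀ d : ℝ, 0 < d →
      ENNReal.ofReal (a' / b' / d) = ENNReal.ofReal a' * ENNReal.ofReal (2 * (r / d)) /
        (ENNReal.ofReal b' * ENNReal.ofReal (2 * r)) := by
    intro a' b' ha' hb' d hd
    rw [← ENNReal.ofReal_mul ha', ← ENNReal.ofReal_mul hb'.le,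
      ← ENNReal.ofReal_div_of_pos (by positivity)]
    congr 1
    field_simp
  constructor
  · calc ENNReal.ofReal (a / b / C ^ k)
        = ENNReal.ofReal a * ENNReal.ofReal (2 * (r / C ^ k)) /
            (ENNReal.ofReal b * ENNReal.ofReal (2 * r)) := hratio ha.le hb _ (by positivity)
      _ ≤ μ (ball ζ (r / C ^ k)) / μ (ball ζ r) :=
          ENNReal.div_le_div (hball _ ((div_le_self hr.le (one_le_pow₀ hC)).trans hrδ)).1
            (hball r hrδ).2
      _ ≤ _ := ENNReal.div_le_div_right
          (measure_mono (ball_subset_Uset_ball hC (fun x hx => (hTr x hx).2) k)) _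
  · calc μ (Uset T p (ball ζ r) k) / μ (ball ζ r) ≤ μ (ball ζ (r / c ^ k)) / μ (ball ζ r) :=
          ENNReal.div_le_div_right (measure_mono (Uset_ball_subset_ball
            (zero_lt_one.trans_le hc) (fun x hx => (hTr x hx).1) k)) _
      _ ≤ ENNReal.ofReal b * ENNReal.ofReal (2 * (r / c ^ k)) /
            (ENNReal.ofReal a * ENNReal.ofReal (2 * r)) :=
          ENNReal.div_le_div (hball _ ((div_le_self hr.le (one_le_pow₀ hc)).trans hrδ)).2
            (hball r hrδ).1
      _ = ENNReal.ofReal (b / a / c ^ k) := (hratio hb.le ha _ (by positivity)).symm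

theorem tendsto_of_forall_eventually_mem_Icc {α ι β : Type*} [TopologicalSpace β]
    [LinearOrder β] [OrderTopology β] {la : Filter α} {li : Filter ι} [li.NeBot]
    {f : α → β} {lo hi : ι → β} {y : β} (hlo : Tendsto lo li (𝓝 y)) (hhi : Tendsto hi li (𝓝 y))
    (h : ∀ᶠ i in li, ∀ᶠ x in la, f x ∈ Icc (lo i) (hi i)) : Tendsto f la (𝓝 y) := by
  refine tendsto_order.2 ⟨fun z hz => ?_, fun z hz => ?_⟩
  · obtain ⟨i, hi, hzi⟩ := (h.and (hlo.eventually (lt_mem_nhds hz))).exists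
    exact hi.mono fun x hx => hzi.trans_le hx.1
  · obtain ⟨i, hi, hzi⟩ := (h.and (hhi.eventually (gt_mem_nhds hz))).exists
    exact hi.mono fun x hx => hx.2.trans_lt hzi

theorem tendsto_withDensity_Uset_div {T : ℝ → ℝ} {p : ℕ} {ζ D : ℝ}
    (hS : HasDerivAt (T^[p]) D ζ) (hfix : T^[p] ζ = ζ) (hD : 1 < |D|) {μ : Measure ℝ}
    {ρ : ℝ → ℝ} (hμ : μ = volume.withDensity fun x => ENNReal.ofReal (ρ x))
    (hρcont : ContinuousAt ρ ζ) (hρpos : 0 < ρ ζ) {r : ℕ → ℝ} (hrpos : ∀ n, 0 < r n)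
    (hr0 : Tendsto r atTop (𝓝 0)) (k : ℕ) :
    Tendsto (fun n => μ (Uset T p (ball ζ (r n)) k) / μ (ball ζ (r n))) atTop
      (𝓝 (ENNReal.ofReal ((|D|⁻¹) ^ k))) := by
  set bound : ℝ → ℝ≥0∞ := fun e => ENNReal.ofReal ((ρ ζ - e) / (ρ ζ + e) / (|D| + e) ^ k)
  have hbound : Tendsto bound (𝓝 0) (𝓝 (ENNReal.ofReal ((|D|⁻¹) ^ k))) := by
    have : ContinuousAt (fun e : ℝ => (ρ ζ - e) / (ρ ζ + e) / (|D| + e) ^ k) 0 := by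
      fun_prop (disch := simp [hρpos.ne', (zero_lt_one.trans hD).ne'])
    simpa [Function.comp_def, hρpos.ne'] using
      (ENNReal.continuous_ofReal.tendsto _).comp this.tendsto
  -- `bound (-e) = ofReal ((ρ ζ + e) / (ρ ζ - e) / (|D| - e) ^ k)` is the upper bound
  have hbound_neg : Tendsto (fun e => bound (-e)) (𝓝 0) (𝓝 (ENNReal.ofReal ((|D|⁻¹) ^ k))) :=
    hbound.comp (by simpa using (continuous_neg (G := ℝ)).tendsto 0)
  refine tendsto_of_forall_eventually_mem_Icc (li := 𝓝[>] 0)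
    (hbound.mono_left nhdsWithin_le_nhds) (hbound_neg.mono_left nhdsWithin_le_nhds) ?_
  filter_upwards [Ioo_mem_nhdsGT (lt_min (sub_pos.2 hD) hρpos)] with e ⟨he, he_lt⟩
  obtain ⟨heD, heρ⟩ := lt_min_iff.1 he_lt
  obtain ⟨δ, hδ, hball⟩ := eventually_nhds_iff_ball.1
    ((eventually_dist_mem_Icc_of_hasDerivAt hS hfix he).and
      (hρcont.eventually (Icc_mem_nhds (sub_lt_self _ he) (lt_add_of_pos_right _ he))))
  filter_upwards [hr0.eventually (gt_mem_nhds hδ)] with n hn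
  have := withDensity_Uset_div_mem_Icc (p := p) (k := k) (sub_pos.2 heρ) (by linarith)
    (by linarith) (fun x hx => (hball x hx).1) hμ (fun x hx => (hball x hx).2) (hrpos n) hn.le
  simpa [bound, sub_eq_add_neg] using this

theorem statement10_general (T : ℝ → ℝ) (hTmeas : Measurable T)
    (ζ : ℝ)
    (p : ℕ) (hper : T^[p] ζ = ζ)
    (U : Set ℝ) (hU : IsOpen U) (hζU : ζ ∈ U)
    (hC1 : ContDiffOn ℝ 1 (T^[p]) U)
    (hexp : 1 < |deriv (T^[p]) ζ|)
    (μ : Measure ℝ) [IsProbabilityMeasure μ]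
    (ρ : ℝ → ℝ) (hρ : μ = MeasureTheory.volume.withDensity (fun x => ENNReal.ofReal (ρ x)))
    (hρcont : ContinuousAt ρ ζ) (hρpos : 0 < ρ ζ)
    (r : ℕ → ℝ) (hrpos : ∀ n, 0 < r n) (hr0 : Tendsto r atTop (𝓝 0)) :
    (∀ k : ℕ, Tendsto
      (fun n => μ (Qann T p (Metric.ball ζ (r n)) k) / μ (Metric.ball ζ (r n))) atTop
      (𝓝 (ENNReal.ofReal
        ((1 - |deriv (T^[p]) ζ|⁻¹) * (|deriv (T^[p]) ζ|⁻¹) ^ k)))) ∧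
    Tendsto (fun n => μ (Qann T p (Metric.ball ζ (r n)) 0) / μ (Metric.ball ζ (r n))) atTop
      (𝓝 (ENNReal.ofReal (1 - |deriv (T^[p]) ζ|⁻¹))) := by
  have hS : HasDerivAt (T^[p]) (deriv (T^[p]) ζ) ζ :=
    ((hC1.differentiableOn one_ne_zero ζ hζU).differentiableAt (hU.mem_nhds hζU)).hasDerivAt
  have hUlim := tendsto_withDensity_Uset_div hS hper hexp hρ hρcont hρpos hrpos hr0
  have hQ : ∀ k : ℕ, Tendsto (fun n => μ (Qann T p (ball ζ (r n)) k) / μ (ball ζ (r n))) atTop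
      (𝓝 (ENNReal.ofReal
      ((1 - |deriv (T^[p]) ζ|⁻¹) * (|deriv (T^[p]) ζ|⁻¹) ^ k))) := fun k => by
    have hlim := ENNReal.Tendsto.sub (hUlim k) (hUlim (k + 1)) (Or.inl ENNReal.ofReal_ne_top)
    rw [← ENNReal.ofReal_sub _ (by positivity)] at hlim
    convert hlim using 2 with n
    · rw [measure_Qann _ hTmeas measurableSet_ball, ENNReal.sub_div fun _ hlt =>
        (zero_le.trans_lt (hlt.trans_le (measure_mono (Uset_subset_self k)))).ne']
    · congr 1
      ring
  exact ⟨hQ, by simpa using hQ 0⟩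

/-- Let `T : I → I` be Borel measurable on a compact interval
`I = [l, u]`, `ζ` a periodic point of period `p` at which `T^p` is locally a `C¹`
diffeomorphism with `|(T^p)'(ζ)| > 1`, and `μ` a `T`-invariant absolutely continuous Borel
probability measure whose density is continuous and positive at `ζ`. With
`θ = 1 - |(T^p)'(ζ)|⁻¹`, for shrinking balls `B_n` around `ζ` one has
`μ(Q_k(B_n))/μ(B_n) → θ (1-θ)^k` for every `k ≥ 0`; in particular the extremal index
`lim μ(Q(B_n))/μ(B_n)` equals `θ`. -/
theorem statement10 (T : ℝ → ℝ) (hTmeas : Measurable T)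
    (l u : ℝ) (hlu : l < u) (hmap : Set.MapsTo T (Set.Icc l u) (Set.Icc l u))
    (ζ : ℝ) (hζI : ζ ∈ Set.Icc l u)
    (p : ℕ) (hp : 1 ≤ p) (hper : T^[p] ζ = ζ)
    (U : Set ℝ) (hU : IsOpen U) (hζU : ζ ∈ U)
    (hC1 : ContDiffOn ℝ 1 (T^[p]) U) (hinj : Set.InjOn (T^[p]) U)
    (hd : ∀ x ∈ U, deriv (T^[p]) x ≠ 0) (hexp : 1 < |deriv (T^[p]) ζ|)
    (μ : Measure ℝ) [IsProbabilityMeasure μ] (hinv : MeasurePreserving T μ μ)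
    (hsupp : μ (Set.Icc l u)ᶜ = 0)
    (ρ : ℝ → ℝ) (hρ : μ = MeasureTheory.volume.withDensity (fun x => ENNReal.ofReal (ρ x)))
    (hρcont : ContinuousAt ρ ζ) (hρpos : 0 < ρ ζ)
    (r : ℕ → ℝ) (hrpos : ∀ n, 0 < r n) (hr0 : Tendsto r atTop (𝓝 0)) :
    (∀ k : ℕ, Tendsto
      (fun n => μ (Qann T p (Metric.ball ζ (r n)) k) / μ (Metric.ball ζ (r n))) atTop
      (𝓝 (ENNReal.ofReal
        ((1 - |deriv (T^[p]) ζ|⁻¹) * (|deriv (T^[p]) ζ|⁻¹) ^ k)))) ∧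
    Tendsto (fun n => μ (Qann T p (Metric.ball ζ (r n)) 0) / μ (Metric.ball ζ (r n))) atTop
      (𝓝 (ENNReal.ofReal (1 - |deriv (T^[p]) ζ|⁻¹))) :=
  statement10_general T hTmeas ζ p hper U hU hζU hC1 hexp μ ρ hρ hρcont hρpos r hrpos hr0
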